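/- (Theorem 4) Let A_1, …, A_N be real n×n matrices and consider the linear switched system with vector fields f_i(x) = A_i x. Suppose B ⊆ ℝⁿ is a compact absorbing set for the switched system with the origin in the interior of B. Then the origin is globally asymptotically stable under arbitrary switching: (i) for every ε > 0 there exists δ > 0 such that every solution x with ‖x(0)‖₂ < δ satisfies ‖x(t)‖₂ < ε for all t ≥ 0, and (ii) every solution x satisfies x(t) → 0 as t → ∞. -/

import Mathlib

/-
By linearity every multiple `c • x` of a solution is again a solution. As `B` is bounded,
`c • v ∈ B` forces `‖v‖` to be small when `c` is large; as `B` contains a ball around the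
origin, `c • v ∈ B` once `‖v‖` is small enough. Stability then follows from positive
invariance of `B` applied to `c • x`, and convergence from absorption of the single point
`c • x 0`, for arbitrarily large `c`.
-/

/-- A solution of the linear switched system determined by the matrices `A i`:
a function differentiable on `[0,∞)` whose derivative at each `t ≥ 0` is `A i (x t)`
for some index `i` (arbitrary switching). -/
def IsSwitchedSolution {n N : ℕ} (A : Fin N → Matrix (Fin n) (Fin n) ℝ)
    (x : ℝ → EuclideanSpace ℝ (Fin n)) : Prop :=
  ∀ t : ℝ, 0 ≤ t → ∃ i : Fin N,
    HasDerivWithinAt x (WithLp.toLp 2 ((A i).mulVec (x t))) (Set.Ici 0) t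

/-- `M` is positively invariant for the linear switched system. -/
def PositivelyInvariant {n N : ℕ} (A : Fin N → Matrix (Fin n) (Fin n) ℝ)
    (M : Set (EuclideanSpace ℝ (Fin n))) : Prop :=
  ∀ x : ℝ → EuclideanSpace ℝ (Fin n), IsSwitchedSolution A x →
    x 0 ∈ M → ∀ t : ℝ, 0 ≤ t → x t ∈ M

/-- `M` is an absorbing set for the linear switched system. -/
def AbsorbingSet {n N : ℕ} (A : Fin N → Matrix (Fin n) (Fin n) ℝ)
    (M : Set (EuclideanSpace ℝ (Fin n))) : Prop :=
  PositivelyInvariant A M ∧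
    ∀ C : Set (EuclideanSpace ℝ (Fin n)), IsCompact C →
      ∃ tC : ℝ, 0 ≤ tC ∧
        ∀ x : ℝ → EuclideanSpace ℝ (Fin n), IsSwitchedSolution A x →
          x 0 ∈ C → ∀ t : ℝ, tC ≤ t → x t ∈ M

lemma IsSwitchedSolution.const_smul {n N : ℕ} {A : Fin N → Matrix (Fin n) (Fin n) ℝ}
    {x : ℝ → EuclideanSpace ℝ (Fin n)} (hx : IsSwitchedSolution A x) (c : ℝ) :
    IsSwitchedSolution A (c • x) := by
  intro t ht
  obtain ⟨i, hi⟩ := hx t ht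
  refine ⟨i, ?_⟩
  have hfield : WithLp.toLp 2 ((A i).mulVec ((c • x) t).ofLp)
      = c • WithLp.toLp 2 ((A i).mulVec (x t).ofLp) := by
    ext j
    simp [Matrix.mulVec_smul]
  rw [hfield]
  exact hi.const_smul c

lemma Bornology.IsBounded.exists_pos_forall_smul_mem_norm_lt {E : Type*}
    [SeminormedAddCommGroup E] [NormedSpace ℝ E] {B : Set E} (hB : Bornology.IsBounded B)
    {ε : ℝ} (hε : 0 < ε) : ∃ c : ℝ, 0 < c ∧ ∀ v : E, c • v ∈ B → ‖v‖ < ε := by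
  obtain ⟨R, hR⟩ := hB.subset_closedBall 0
  have hc : 0 < (|R| + 1) / ε := by positivity
  refine ⟨(|R| + 1) / ε, hc, fun v hv => ?_⟩
  have hcv : (|R| + 1) / ε * ‖v‖ ≤ R := by
    simpa only [mem_closedBall_zero_iff, norm_smul, Real.norm_of_nonneg hc.le] using hR hv
  have hRε : R < (|R| + 1) / ε * ε := by
    rw [div_mul_cancel₀ _ hε.ne']
    linarith [le_abs_self R]
  exact lt_of_mul_lt_mul_left (hcv.trans_lt hRε) hc.le

lemma smul_mem_of_ball_subset {E : Type*} [SeminormedAddCommGroup E] [NormedSpace ℝ E]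
    {B : Set E} {δ c : ℝ} (hδ : Metric.ball 0 δ ⊆ B) (hc : 0 < c) {v : E}
    (hv : ‖v‖ < δ / c) : c • v ∈ B := by
  apply hδ
  rw [mem_ball_zero_iff, norm_smul, Real.norm_of_nonneg hc.le]
  exact (lt_div_iff₀' hc).mp hv

/-- Theorem 4: if a linear switched system has a compact absorbing set `B` with `0` in
its interior, then the origin is globally asymptotically stable under arbitrary
switching: (i) it is stable, and (ii) every solution converges to the origin. -/
theorem origin_globally_asymptotically_stable_of_absorbing {n N : ℕ}
    (A : Fin N → Matrix (Fin n) (Fin n) ℝ)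
    (B : Set (EuclideanSpace ℝ (Fin n))) (hB : IsCompact B)
    (h0 : (0 : EuclideanSpace ℝ (Fin n)) ∈ interior B)
    (habs : AbsorbingSet A B) :
    (∀ ε : ℝ, 0 < ε → ∃ δ : ℝ, 0 < δ ∧
      ∀ x : ℝ → EuclideanSpace ℝ (Fin n), IsSwitchedSolution A x →
        ‖x 0‖ < δ → ∀ t : ℝ, 0 ≤ t → ‖x t‖ < ε) ∧
    (∀ x : ℝ → EuclideanSpace ℝ (Fin n), IsSwitchedSolution A x →
      Filter.Tendsto x Filter.atTop (nhds 0)) := by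
  obtain ⟨hinv, habsorb⟩ := habs
  obtain ⟨δ, hδ, hball⟩ := Metric.mem_nhds_iff.mp (mem_interior_iff_mem_nhds.mp h0)
  constructor
  · intro ε hε
    obtain ⟨c, hc, hsmall⟩ := hB.isBounded.exists_pos_forall_smul_mem_norm_lt hε
    refine ⟨δ / c, by positivity, fun x hx hx0 t ht => hsmall _ ?_⟩
    exact hinv _ (hx.const_smul c) (smul_mem_of_ball_subset hball hc hx0) t ht
  · intro x hx
    refine Metric.tendsto_atTop.mpr fun ε hε => ?_
    obtain ⟨c, -, hsmall⟩ := hB.isBounded.exists_pos_forall_smul_mem_norm_lt hε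
    obtain ⟨tC, -, htC⟩ := habsorb {c • x 0} isCompact_singleton
    refine ⟨tC, fun t ht => ?_⟩
    rw [dist_zero_right]
    exact hsmall _ (htC _ (hx.const_smul c) rfl t ht)
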